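/- arXiv:2006.03237 — 3 statements merged into one kernel-verified Lean document; each statement's English description precedes it below -/
import Mathlib

section
/- For |q| > 1 and any n ∈ ℤ, the coefficient t_n^{(2)} := Σ_{l+m=n} q^{-(l(l+1)+m(m+1))/2} of z^n in θ_q(z)² is nonzero. -/
/-!
Put `x = q⁻¹`. Completing the square in `l`, the coefficient is `x ^ c` times
`ϑ₃(x) = ∑ x ^ (m²)` when `n` is even and times `ϑ₂'(x) = ∑ x ^ (m (m + 1))` when `n` is odd.
Splitting the double sums over `ℤ²` according to the parity of `a + b` and substituting
`(a, b) = (s + t, s - t)` or `(s + t, s - t - 1)` gives the duplication formulas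
`ϑ₃(x) ϑ₃(-x) = ϑ₃(-x²)²` and `ϑ₂'(x)² = 2 ϑ₃(x²) ϑ₂'(x²)`. So a zero of `ϑ₃` or `ϑ₂'` in the
punctured unit disc would produce zeros of arbitrarily small modulus, while for `|x| ≤ 1/4`
the constant term of each series dominates the rest.
-/

/-- The pairs `(a, b)` with `a + b` even, resp. odd, are exactly the `(s + t, s - t)`,
resp. `(s + t, s - t - 1)`. -/
theorem HasSum.prod_int_even_add_odd {M : Type*} [AddCommMonoid M] [TopologicalSpace M]
    [ContinuousAdd M] {f : ℤ × ℤ → M} {a b : M}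
    (ha : HasSum (fun p : ℤ × ℤ => f (p.1 + p.2, p.1 - p.2)) a)
    (hb : HasSum (fun p : ℤ × ℤ => f (p.1 + p.2, p.1 - p.2 - 1)) b) : HasSum f (a + b) := by
  let e : ℤ × ℤ → ℤ × ℤ := fun p => (p.1 + p.2, p.1 - p.2)
  let e' : ℤ × ℤ → ℤ × ℤ := fun p => (p.1 + p.2, p.1 - p.2 - 1)
  have he : e.Injective := fun p p' h => by simp only [e, Prod.ext_iff] at h ⊢; omega
  have he' : e'.Injective := fun p p' h => by simp only [e', Prod.ext_iff] at h ⊢; omega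
  have hcompl : IsCompl (Set.range e) (Set.range e') := by
    constructor
    · rw [Set.disjoint_iff]
      rintro _ ⟨⟨p, rfl⟩, ⟨p', h⟩⟩
      simp only [e, e', Prod.ext_iff] at h
      omega
    · rw [codisjoint_iff_le_sup]
      rintro ⟨m, n⟩ -
      rcases Int.even_or_odd' (m + n) with ⟨k, h | h⟩
      · exact Or.inl ⟨(k, m - k), by simp only [e, Prod.ext_iff]; omega⟩
      · exact Or.inr ⟨(k + 1, m - k - 1), by simp only [e', Prod.ext_iff]; omega⟩
  exact (he.hasSum_range_iff.2 ha).add_isCompl hcompl (he'.hasSum_range_iff.2 hb)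

theorem tsum_eq_zero_of_comp_equiv_eq_neg {β G : Type*} [AddCommGroup G] [TopologicalSpace G]
    [IsTopologicalAddGroup G] [T2Space G] [IsAddTorsionFree G] {f : β → G} (σ : β ≃ β)
    (h : ∀ b, f (σ b) = -f b) : ∑' b, f b = 0 := by
  have := σ.tsum_eq f
  simp only [h, tsum_neg] at this
  exact self_eq_neg.mp this.symm

theorem hasSum_mul_of_summable_norm {R ι κ : Type*} [NormedRing R] [CompleteSpace R]
    {f : ι → R} {g : κ → R} (hf : Summable fun i => ‖f i‖) (hg : Summable fun k => ‖g k‖) :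
    HasSum (fun p : ι × κ => f p.1 * g p.2) ((∑' i, f i) * ∑' k, g k) := by
  rw [tsum_mul_tsum_of_summable_norm hf hg]
  exact (summable_mul_of_summable_norm hf hg).hasSum

theorem norm_tsum_le_of_norm_le_pow_succ {E : Type*} [SeminormedAddCommGroup E] {c : ℕ → E}
    {r : ℝ} (hr0 : 0 ≤ r) (hr : r < 1) (hc : ∀ n, ‖c n‖ ≤ r ^ (n + 1)) :
    ‖∑' n, c n‖ ≤ r / (1 - r) := by
  refine tsum_of_norm_bounded ?_ hc
  simpa [pow_succ', div_eq_mul_inv] using (hasSum_geometric_of_lt_one hr0 hr).mul_left r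

theorem add_ne_zero_of_norm_lt {E : Type*} [SeminormedAddGroup E] {a w : E} (h : ‖w‖ < ‖a‖) :
    a + w ≠ 0 := by
  intro h0
  rw [add_eq_zero_iff_eq_neg.1 h0, norm_neg] at h
  exact lt_irrefl _ h

theorem summable_pow_natAbs {r : ℝ} (hr0 : 0 ≤ r) (hr : r < 1) :
    Summable fun m : ℤ => r ^ m.natAbs := by
  refine summable_int_iff_summable_nat_and_neg.2 ⟨?_, ?_⟩ <;>
    simpa using summable_geometric_of_lt_one hr0 hr

section Sign

variable {K : Type*} [Field K]

theorem neg_one_zpow_eq_of_even_sub {a b : ℤ} (h : Even (a - b)) : (-1 : K) ^ a = (-1) ^ b := by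
  rw [← sub_add_cancel a b, zpow_add₀ (by norm_num), h.neg_one_zpow, one_mul]

theorem neg_one_zpow_eq_of_odd_sub {a b : ℤ} (h : Odd (a - b)) : (-1 : K) ^ a = -(-1) ^ b := by
  rw [← sub_add_cancel a b, zpow_add₀ (by norm_num), h.neg_one_zpow, neg_one_mul]

theorem neg_zpow (x : K) (k : ℤ) : (-x) ^ k = (-1) ^ k * x ^ k := by
  rw [neg_eq_neg_one_mul, mul_zpow]

end Sign

theorem zpow_mul_zpow_eq_sq_zpow_mul {G₀ : Type*} [GroupWithZero G₀] {x : G₀} (hx0 : x ≠ 0)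
    {a b c d : ℤ} (h : a + b = 2 * (c + d)) : x ^ a * x ^ b = (x ^ 2) ^ c * (x ^ 2) ^ d := by
  rw [← zpow_add₀ hx0, ← zpow_add₀ (pow_ne_zero 2 hx0), ← zpow_natCast, ← zpow_mul, h]
  rfl

section NormedDivisionRing

variable {𝕜 : Type*} [NormedDivisionRing 𝕜] {x : 𝕜}

theorem norm_zpow_le_pow_of_le (hx0 : x ≠ 0) (hx : ‖x‖ ≤ 1) {e : ℤ} {k : ℕ} (hk : (k : ℤ) ≤ e) :
    ‖x ^ e‖ ≤ ‖x‖ ^ k := by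
  rw [norm_zpow, ← zpow_natCast]
  exact zpow_le_zpow_right_of_le_one₀ (norm_pos_iff.2 hx0) hx hk

theorem summable_norm_zpow_quadratic (hx0 : x ≠ 0) (hx : ‖x‖ < 1) (a b : ℤ) :
    Summable fun m : ℤ => ‖x ^ (m * m + a * m + b)‖ := by
  have hbound : ∀ m : ℤ, ‖x ^ (m * m + a * m + b)‖ ≤ ‖x ^ (b - a * a - 1)‖ * ‖x‖ ^ m.natAbs := by
    intro m
    rw [show m * m + a * m + b = (b - a * a - 1) + (m * m + a * m + a * a + 1) by ring,
      zpow_add₀ hx0, norm_mul]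
    gcongr
    refine norm_zpow_le_pow_of_le hx0 hx.le ?_
    nlinarith [Int.natAbs_mul_self' m, sq_nonneg (2 * a + m), sq_nonneg (3 * (m.natAbs : ℤ) - 2),
      Int.natCast_nonneg m.natAbs]
  exact .of_nonneg_of_le (fun _ => norm_nonneg _) hbound
    ((summable_pow_natAbs (norm_nonneg x) hx).mul_left _)

theorem norm_sq_lt_one (hx : ‖x‖ < 1) : ‖x ^ 2‖ < 1 := by
  rw [norm_pow]
  exact pow_lt_one₀ (norm_nonneg x) hx two_ne_zero

theorem sq_induction_of_norm_lt_one {P : 𝕜 → Prop} {ε : ℝ} (hε : 0 < ε)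
    (small : ∀ y ≠ 0, ‖y‖ ≤ ε → P y) (of_sq : ∀ y ≠ 0, ‖y‖ < 1 → P (y ^ 2) → P y)
    (hx0 : x ≠ 0) (hx : ‖x‖ < 1) : P x := by
  have key : ∀ n : ℕ, ∀ y ≠ 0, ‖y‖ < 1 → P (y ^ 2 ^ n) → P y := by
    intro n
    induction n with
    | zero => intro y _ _ h; simpa using h
    | succ n ih =>
      intro y hy0 hy h
      refine of_sq y hy0 hy (ih _ (pow_ne_zero 2 hy0) (norm_sq_lt_one hy) ?_)
      rwa [← pow_mul, ← pow_succ']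
  obtain ⟨n, hn⟩ := exists_pow_lt_of_lt_one hε hx
  refine key n x hx0 hx (small _ (pow_ne_zero _ hx0) ?_)
  rw [norm_pow]
  exact (pow_le_pow_of_le_one (norm_nonneg x) hx.le Nat.lt_two_pow_self.le).trans hn.le

end NormedDivisionRing

/-- The theta constant `ϑ₃` in the nome `x`; `theta₃ (-x)` is `ϑ₄`. -/
noncomputable def theta₃ (x : ℂ) : ℂ := ∑' m : ℤ, x ^ (m * m)

/-- `x ^ (-1/4) ϑ₂`, which avoids fractional powers of the nome `x`. -/
noncomputable def reducedTheta₂ (x : ℂ) : ℂ := ∑' m : ℤ, x ^ (m * (m + 1))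

section Theta

variable {x : ℂ}

theorem summable_norm_theta₃_term (hx0 : x ≠ 0) (hx : ‖x‖ < 1) :
    Summable fun m : ℤ => ‖x ^ (m * m)‖ := by
  simpa using summable_norm_zpow_quadratic hx0 hx 0 0

theorem summable_norm_reducedTheta₂_term (hx0 : x ≠ 0) (hx : ‖x‖ < 1) :
    Summable fun m : ℤ => ‖x ^ (m * (m + 1))‖ := by
  simpa [mul_add] using summable_norm_zpow_quadratic hx0 hx 1 0

theorem theta₃_mul_theta₃_neg (hx0 : x ≠ 0) (hx : ‖x‖ < 1) :
    theta₃ x * theta₃ (-x) = theta₃ (-x ^ 2) ^ 2 := by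
  unfold theta₃
  have hG := summable_norm_theta₃_term hx0 hx
  have hG' := summable_norm_theta₃_term (neg_ne_zero.2 hx0) (by rwa [norm_neg])
  have hG₂ := summable_norm_theta₃_term (neg_ne_zero.2 (pow_ne_zero 2 hx0))
    (by rw [norm_neg]; exact norm_sq_lt_one hx)
  have hprod := hasSum_mul_of_summable_norm hG hG'
  have heven : HasSum (fun p : ℤ × ℤ => x ^ ((p.1 + p.2) * (p.1 + p.2)) *
      (-x) ^ ((p.1 - p.2) * (p.1 - p.2))) ((∑' m : ℤ, (-x ^ 2) ^ (m * m)) ^ 2) := by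
    rw [sq]
    refine (hasSum_mul_of_summable_norm hG₂ hG₂).congr_fun fun ⟨s, t⟩ => ?_
    rw [neg_zpow x, neg_zpow (x ^ 2), neg_zpow (x ^ 2),
      neg_one_zpow_eq_of_even_sub (b := s * s + t * t) ⟨-(s * t), by ring⟩,
      zpow_add₀ (by norm_num : (-1 : ℂ) ≠ 0)]
    linear_combination (-1 : ℂ) ^ (s * s) * (-1) ^ (t * t) *
      zpow_mul_zpow_eq_sq_zpow_mul hx0 (a := (s + t) * (s + t)) (b := (s - t) * (s - t))
        (c := s * s) (d := t * t) (by ring)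
  have hodd : HasSum (fun p : ℤ × ℤ => x ^ ((p.1 + p.2) * (p.1 + p.2)) *
      (-x) ^ ((p.1 - p.2 - 1) * (p.1 - p.2 - 1))) 0 := by
    have hs : Summable fun p : ℤ × ℤ => x ^ ((p.1 + p.2) * (p.1 + p.2)) *
        (-x) ^ ((p.1 - p.2 - 1) * (p.1 - p.2 - 1)) :=
      hprod.summable.comp_injective (i := fun p : ℤ × ℤ => (p.1 + p.2, p.1 - p.2 - 1))
        fun p p' h => by simp only [Prod.ext_iff] at h ⊢; omega
    -- `(s, t) ↦ (s, -1 - t)` swaps `a = s + t` and `b = s - t - 1`, which have opposite parity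
    rw [← tsum_eq_zero_of_comp_equiv_eq_neg ((Equiv.refl ℤ).prodCongr (Equiv.subLeft (-1))) ?_]
    · exact hs.hasSum
    rintro ⟨s, t⟩
    simp only [Equiv.prodCongr_apply, Equiv.coe_refl, Prod.map, id, Equiv.subLeft_apply]
    rw [neg_zpow x, neg_zpow x, neg_one_zpow_eq_of_odd_sub (b := (s - t - 1) * (s - t - 1))
      ⟨2 * s * t + s - t - 1, by ring⟩]
    ring_nf
  have := HasSum.prod_int_even_add_odd
    (f := fun p : ℤ × ℤ => x ^ (p.1 * p.1) * (-x) ^ (p.2 * p.2)) heven hodd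
  rw [add_zero] at this
  exact hprod.unique this

theorem reducedTheta₂_sq (hx0 : x ≠ 0) (hx : ‖x‖ < 1) :
    reducedTheta₂ x ^ 2 = 2 * theta₃ (x ^ 2) * reducedTheta₂ (x ^ 2) := by
  unfold reducedTheta₂ theta₃
  have hH := summable_norm_reducedTheta₂_term hx0 hx
  have hG₂ := summable_norm_theta₃_term (pow_ne_zero 2 hx0) (norm_sq_lt_one hx)
  have hH₂ := summable_norm_reducedTheta₂_term (pow_ne_zero 2 hx0) (norm_sq_lt_one hx)
  have hprod := hasSum_mul_of_summable_norm hH hH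
  have heven : HasSum (fun p : ℤ × ℤ => x ^ ((p.1 + p.2) * (p.1 + p.2 + 1)) *
      x ^ ((p.1 - p.2) * (p.1 - p.2 + 1)))
      ((∑' m : ℤ, (x ^ 2) ^ (m * (m + 1))) * ∑' m : ℤ, (x ^ 2) ^ (m * m)) := by
    refine (hasSum_mul_of_summable_norm hH₂ hG₂).congr_fun fun ⟨s, t⟩ => ?_
    exact zpow_mul_zpow_eq_sq_zpow_mul hx0 (by ring)
  have hodd : HasSum (fun p : ℤ × ℤ => x ^ ((p.1 + p.2) * (p.1 + p.2 + 1)) *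
      x ^ ((p.1 - p.2 - 1) * (p.1 - p.2 - 1 + 1)))
      ((∑' m : ℤ, (x ^ 2) ^ (m * m)) * ∑' m : ℤ, (x ^ 2) ^ (m * (m + 1))) := by
    refine (hasSum_mul_of_summable_norm hG₂ hH₂).congr_fun fun ⟨s, t⟩ => ?_
    exact zpow_mul_zpow_eq_sq_zpow_mul hx0 (by ring)
  have := HasSum.prod_int_even_add_odd
    (f := fun p : ℤ × ℤ => x ^ (p.1 * (p.1 + 1)) * x ^ (p.2 * (p.2 + 1))) heven hodd
  rw [sq, hprod.unique this]
  ring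

theorem theta₃_ne_zero_of_norm_le (hx0 : x ≠ 0) (hx : ‖x‖ ≤ 1 / 4) : theta₃ x ≠ 0 := by
  have hx1 : ‖x‖ < 1 := by linarith
  have hs := (summable_norm_theta₃_term hx0 hx1).of_norm
  have htail : ‖∑' n : ℕ, x ^ (((n : ℤ) + 1) * ((n : ℤ) + 1))‖ ≤ 1 / 3 := by
    refine (norm_tsum_le_of_norm_le_pow_succ (norm_nonneg x) hx1
      fun n => norm_zpow_le_pow_of_le hx0 hx1.le (by push_cast; nlinarith)).trans ?_
    rw [div_le_iff₀ (by linarith)]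
    linarith
  have hsplit : theta₃ x = 1 + 2 * ∑' n : ℕ, x ^ (((n : ℤ) + 1) * ((n : ℤ) + 1)) := by
    rw [theta₃, tsum_of_add_one_of_neg_add_one (f := fun m : ℤ => x ^ (m * m))
      (hs.comp_injective (i := fun n : ℕ => (n : ℤ) + 1) fun a b h => by simpa using h)
      (hs.comp_injective (i := fun n : ℕ => -((n : ℤ) + 1)) fun a b h => by simpa using h)]
    simp only [neg_mul_neg, mul_zero, zpow_zero]
    ring
  rw [hsplit]
  refine add_ne_zero_of_norm_lt ?_
  rw [norm_mul, norm_one, Complex.norm_two]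
  linarith

theorem reducedTheta₂_ne_zero_of_norm_le (hx0 : x ≠ 0) (hx : ‖x‖ ≤ 1 / 4) :
    reducedTheta₂ x ≠ 0 := by
  have hx1 : ‖x‖ < 1 := by linarith
  have hs := (summable_norm_reducedTheta₂_term hx0 hx1).of_norm
  have hsn : Summable fun n : ℕ => x ^ ((n : ℤ) * ((n : ℤ) + 1)) :=
    hs.comp_injective (i := fun n : ℕ => (n : ℤ)) Nat.cast_injective
  have htail : ‖∑' n : ℕ, x ^ (((n : ℤ) + 1) * ((n : ℤ) + 1 + 1))‖ ≤ 1 / 3 := by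
    refine (norm_tsum_le_of_norm_le_pow_succ (norm_nonneg x) hx1
      fun n => norm_zpow_le_pow_of_le hx0 hx1.le (by push_cast; nlinarith)).trans ?_
    rw [div_le_iff₀ (by linarith)]
    linarith
  have hsplit :
      reducedTheta₂ x = 2 * (1 + ∑' n : ℕ, x ^ (((n : ℤ) + 1) * ((n : ℤ) + 1 + 1))) := by
    rw [reducedTheta₂, tsum_of_nat_of_neg_add_one (f := fun m : ℤ => x ^ (m * (m + 1))) hsn
      (hs.comp_injective (i := fun n : ℕ => -((n : ℤ) + 1)) fun a b h => by simpa using h)]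
    have hneg : ∀ n : ℕ, -((n : ℤ) + 1) * (-((n : ℤ) + 1) + 1) = n * (n + 1) := fun n => by ring
    simp only [hneg, hsn.tsum_eq_zero_add, Nat.cast_zero, zero_mul, zpow_zero, Nat.cast_add,
      Nat.cast_one]
    ring
  rw [hsplit]
  refine mul_ne_zero two_ne_zero (add_ne_zero_of_norm_lt ?_)
  rw [norm_one]
  linarith

theorem theta₃_ne_zero (hx0 : x ≠ 0) (hx : ‖x‖ < 1) : theta₃ x ≠ 0 := by
  refine left_ne_zero_of_mul (sq_induction_of_norm_lt_one
    (P := fun y => theta₃ y * theta₃ (-y) ≠ 0) (by norm_num : (0 : ℝ) < 1 / 4)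
    (fun y hy0 hy => ?_) (fun y hy0 hy h => ?_) hx0 hx)
  · exact mul_ne_zero (theta₃_ne_zero_of_norm_le hy0 hy)
      (theta₃_ne_zero_of_norm_le (neg_ne_zero.2 hy0) (by rwa [norm_neg]))
  · rw [theta₃_mul_theta₃_neg hy0 hy]
    exact pow_ne_zero 2 (right_ne_zero_of_mul h)

theorem reducedTheta₂_ne_zero (hx0 : x ≠ 0) (hx : ‖x‖ < 1) : reducedTheta₂ x ≠ 0 := by
  refine sq_induction_of_norm_lt_one (P := fun y => reducedTheta₂ y ≠ 0)
    (by norm_num : (0 : ℝ) < 1 / 4) (fun y hy0 hy => reducedTheta₂_ne_zero_of_norm_le hy0 hy)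
    (fun y hy0 hy h h0 => ?_) hx0 hx
  have hsq := reducedTheta₂_sq hy0 hy
  rw [h0, zero_pow two_ne_zero] at hsq
  exact mul_ne_zero (mul_ne_zero two_ne_zero
    (theta₃_ne_zero (pow_ne_zero 2 hy0) (norm_sq_lt_one hy))) h hsq.symm

end Theta

theorem theta_square_coeff_eq_mul_tsum {q : ℂ} (hq : q ≠ 0) (n c t : ℤ) (e : ℤ → ℤ)
    (he : ∀ l, l * (l + 1) + (n - l) * (n - l + 1) = 2 * (c + e (l - t))) :
    ∑' l : ℤ, q ^ (-((l * (l + 1) + (n - l) * (n - l + 1)) / 2)) = q⁻¹ ^ c * ∑' l, q⁻¹ ^ e l := by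
  rw [← (Equiv.subRight t).tsum_eq fun l => q⁻¹ ^ e l, ← tsum_mul_left]
  refine tsum_congr fun l => ?_
  rw [Equiv.subRight_apply, he l, Int.mul_ediv_cancel_left _ two_ne_zero, zpow_neg, ← inv_zpow,
    zpow_add₀ (inv_ne_zero hq)]

/-- For `|q| > 1` and any `n ∈ ℤ`, the coefficient
`t_n^{(2)} = ∑_{l+m=n} q^{-(l(l+1)+m(m+1))/2}` of `z^n` in `θ_q(z)²` is nonzero. -/
theorem theta_square_coeff_ne_zero (q : ℂ) (hq : 1 < ‖q‖) (n : ℤ) :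
    (∑' l : ℤ, q ^ (-((l * (l + 1) + (n - l) * (n - l + 1)) / 2))) ≠ 0 := by
  have hq0 : q ≠ 0 := norm_pos_iff.1 (one_pos.trans hq)
  have hx0 : q⁻¹ ≠ 0 := inv_ne_zero hq0
  have hx : ‖q⁻¹‖ < 1 := by rw [norm_inv]; exact inv_lt_one_of_one_lt₀ hq
  rcases Int.even_or_odd' n with ⟨t, rfl | rfl⟩
  · rw [theta_square_coeff_eq_mul_tsum hq0 _ (t * t + t) t (fun l => l * l) fun l => by ring]
    exact mul_ne_zero (zpow_ne_zero _ hx0) (theta₃_ne_zero hx0 hx)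
  · rw [theta_square_coeff_eq_mul_tsum hq0 _ ((t + 1) * (t + 1)) (t + 1) (fun l => l * (l + 1))
      fun l => by ring]
    exact mul_ne_zero (zpow_ne_zero _ hx0) (reducedTheta₂_ne_zero hx0 hx)
end

section
/- Define f(x) := Σ_{a,b∈ℤ} x^{a²+ab+b²} for real 0 ≤ |x| < 1. Then f(-x) = 2·f(x⁴) - f(x) for all 0 ≤ x < 1. -/
private lemma qf_nonneg (a b : ℤ) : 0 ≤ a^2 + a*b + b^2 := by nlinarith [sq_nonneg (a+b)]

private lemma qf_bound (a b : ℤ) : a.natAbs + b.natAbs ≤ 2 * (a^2+a*b+b^2).toNat := by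
  have ea : ((a.natAbs:ℤ)) * a.natAbs = a * a := Int.natAbs_mul_self
  have eb : ((b.natAbs:ℤ)) * b.natAbs = b * b := Int.natAbs_mul_self
  have h1 : (a.natAbs : ℤ) ≤ a^2 := by nlinarith [Int.ofNat_nonneg a.natAbs]
  have h2 : (b.natAbs : ℤ) ≤ b^2 := by nlinarith [Int.ofNat_nonneg b.natAbs]
  have h3 : (a.natAbs : ℤ) + b.natAbs ≤ 2*(a^2+a*b+b^2) := by nlinarith [sq_nonneg (a+b)]
  have h0 := qf_nonneg a b
  omega

private lemma qf_even (a b : ℤ) : Even (a^2+a*b+b^2) ↔ Even a ∧ Even b := by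
  rcases Int.even_or_odd a with ha | ha <;> rcases Int.even_or_odd b with hb | hb <;>
    simp_all [parity_simps]

private lemma qf_summable (r : ℝ) (h0 : 0 ≤ r) (h1 : r < 1) :
    Summable fun p : ℤ × ℤ => r ^ (p.1^2 + p.1*p.2 + p.2^2).toNat := by
  set y := Real.sqrt r with hy
  have hy0 : 0 ≤ y := Real.sqrt_nonneg r
  have hy1 : y < 1 := by
    rw [hy, show (1:ℝ) = Real.sqrt 1 by simp]
    exact Real.sqrt_lt_sqrt h0 h1
  have hgeo : Summable fun n : ℤ => y ^ n.natAbs := by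
    apply Summable.of_nat_of_neg <;> simpa using summable_geometric_of_lt_one hy0 hy1
  have hsum : Summable fun p : ℤ × ℤ => y ^ p.1.natAbs * y ^ p.2.natAbs := by
    have := Summable.mul_of_nonneg hgeo hgeo (fun n => by positivity) (fun n => by positivity)
    exact this
  apply Summable.of_nonneg_of_le (fun p => by positivity) _ hsum
  intro p
  have hr : r = y * y := (Real.mul_self_sqrt h0).symm
  calc r ^ (p.1^2 + p.1*p.2 + p.2^2).toNat
      = y ^ (2 * (p.1^2 + p.1*p.2 + p.2^2).toNat) := by
        rw [hr, pow_mul]; ring_nf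
    _ ≤ y ^ (p.1.natAbs + p.2.natAbs) :=
        pow_le_pow_of_le_one hy0 hy1.le (qf_bound p.1 p.2)
    _ = y ^ p.1.natAbs * y ^ p.2.natAbs := pow_add y _ _

/-- For `f(x) := ∑_{a,b ∈ ℤ} x^{a²+ab+b²}` and `0 ≤ x < 1`, one has
`f(-x) = 2 f(x⁴) - f(x)`. -/
theorem quadratic_form_series_functional (x : ℝ) (hx0 : 0 ≤ x) (hx1 : x < 1) :
    (∑' p : ℤ × ℤ, (-x) ^ (p.1 ^ 2 + p.1 * p.2 + p.2 ^ 2)) =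
      2 * (∑' p : ℤ × ℤ, (x ^ 4) ^ (p.1 ^ 2 + p.1 * p.2 + p.2 ^ 2)) -
        ∑' p : ℤ × ℤ, x ^ (p.1 ^ 2 + p.1 * p.2 + p.2 ^ 2) := by
  set N : ℤ × ℤ → ℕ := fun p => (p.1^2 + p.1*p.2 + p.2^2).toNat with hN
  have hzpow : ∀ (c : ℝ) (p : ℤ × ℤ), c ^ (p.1 ^ 2 + p.1 * p.2 + p.2 ^ 2) = c ^ N p := by
    intro c p
    rw [hN]
    rw [← zpow_natCast c, Int.toNat_of_nonneg (qf_nonneg p.1 p.2)]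
  rw [tsum_congr (hzpow (-x)), tsum_congr (hzpow (x^4)), tsum_congr (hzpow x)]
  -- define the "even part"
  set g : ℤ × ℤ → ℝ := fun p => if Even p.1 ∧ Even p.2 then x ^ N p else 0 with hg
  have hNeven : ∀ p : ℤ × ℤ, Even (N p) ↔ (Even p.1 ∧ Even p.2) := by
    intro p
    rw [← qf_even p.1 p.2, hN]
    dsimp only
    have h0 := qf_nonneg p.1 p.2
    rw [Int.even_iff, Nat.even_iff]
    omega
  have hptwise : ∀ p : ℤ × ℤ, (-x) ^ N p = 2 * g p - x ^ N p := by
    intro p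
    by_cases h : Even p.1 ∧ Even p.2
    · have he : Even (N p) := (hNeven p).2 h
      rw [hg]; simp only [h, if_pos, and_self]
      rw [he.neg_pow]; ring
    · have ho : Odd (N p) := Nat.odd_iff.2 (by
        have := (hNeven p).not.2 h
        rw [Nat.even_iff] at this; omega)
      rw [hg]; simp only [h, if_neg, not_false_iff]
      rw [ho.neg_pow]; ring
  have hSx : Summable fun p : ℤ × ℤ => x ^ N p := qf_summable x hx0 hx1
  have hSg : Summable g := by
    apply Summable.of_nonneg_of_le _ _ hSx
    · intro p; rw [hg]; dsimp only; split <;> positivity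
    · intro p; rw [hg]; dsimp only; split
      · exact le_refl _
      · positivity
  -- sum of g equals the x^4 sum
  have hx4 : (0:ℝ) ≤ x^4 ∧ x^4 < 1 := ⟨by positivity, by
    calc x^4 ≤ x := pow_le_of_le_one hx0 hx1.le (by norm_num)
    _ < 1 := hx1⟩
  have hginj : Function.Injective (fun q : ℤ × ℤ => ((2*q.1, 2*q.2) : ℤ × ℤ)) := by
    intro p q h; simp only [Prod.mk.injEq] at h; ext <;> omega
  have hgsum : (∑' q : ℤ × ℤ, (x^4) ^ N q) = ∑' p, g p := by
    rw [← Function.Injective.tsum_eq hginj (f := g) ?_]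
    · apply tsum_congr
      intro q
      have heq : N (2*q.1, 2*q.2) = 4 * N q := by
        rw [hN]
        have : ((2*q.1)^2 + (2*q.1)*(2*q.2) + (2*q.2)^2) = 4 * (q.1^2 + q.1*q.2 + q.2^2) := by
          ring
        dsimp only
        rw [this]
        have h0 := qf_nonneg q.1 q.2
        omega
      rw [hg]
      simp only [heq]
      rw [if_pos ⟨⟨q.1, by ring⟩, ⟨q.2, by ring⟩⟩]
      rw [← pow_mul]
    · intro p hp
      rw [Function.mem_support, hg] at hp
      by_cases h : Even p.1 ∧ Even p.2
      · obtain ⟨⟨a, ha⟩, ⟨b, hb⟩⟩ := h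
        exact ⟨(a, b), by simp [Prod.ext_iff]; omega⟩
      · simp [h] at hp
  rw [hgsum]
  rw [tsum_congr hptwise, Summable.tsum_sub ((hSg.mul_left 2)) hSx, tsum_mul_left]
end

section
/- Define f(x) := Σ_{a,b∈ℤ} x^{a²+ab+b²} for real -1 < x < 1. Then f has at least one zero in the open interval (-1, 0). -/
/-!
The zero lies already in `(-1/4, 0)`: `f 0 = 1`, and `f (-1/4) < 0` by a direct estimate.
Since `a² + ab + b² ≥ |a| + |b|` except at `±(1, -1)`, every term satisfies
`(-t)^(a²+ab+b²) ≤ t^|a| * t^|b|` for `0 ≤ t ≤ 1`. Keeping the nine terms with `|a|, |b| ≤ 1`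
exactly and bounding the others this way gives
`f (-1/4) ≤ ((1 + 1/4) / (1 - 1/4))² - 89/32 = 25/9 - 89/32 = -1/288`.
The intermediate value theorem finishes the proof.
-/

open Finset Set

def eisensteinNorm (p : ℤ × ℤ) : ℕ := (p.1 ^ 2 + p.1 * p.2 + p.2 ^ 2).natAbs

lemma eisensteinNorm_cast (p : ℤ × ℤ) :
    (eisensteinNorm p : ℤ) = p.1 ^ 2 + p.1 * p.2 + p.2 ^ 2 :=
  Int.natAbs_of_nonneg (by nlinarith [sq_nonneg (p.1 + p.2), sq_nonneg p.1, sq_nonneg p.2])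

lemma natAbs_add_natAbs_le_two_mul_eisensteinNorm (p : ℤ × ℤ) :
    p.1.natAbs + p.2.natAbs ≤ 2 * eisensteinNorm p := by
  zify
  rw [eisensteinNorm_cast]
  nlinarith [Int.natCast_natAbs p.1 ▸ Int.natAbs_le_self_sq p.1,
    Int.natCast_natAbs p.2 ▸ Int.natAbs_le_self_sq p.2, sq_nonneg (p.1 + p.2)]

lemma natAbs_add_natAbs_le_eisensteinNorm {p : ℤ × ℤ} (h₁ : p ≠ (1, -1)) (h₂ : p ≠ (-1, 1)) :
    p.1.natAbs + p.2.natAbs ≤ eisensteinNorm p := by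
  obtain ⟨a, b⟩ := p
  zify
  rw [eisensteinNorm_cast]
  by_contra! hlt
  have hsmall : |a| + |b| < 4 := by
    nlinarith [sq_nonneg (|a| - |b|), sq_abs a, sq_abs b, neg_abs_le (a * b), abs_mul a b]
  obtain ⟨ha₁, ha₂⟩ := abs_lt.mp (show |a| < 4 by linarith [abs_nonneg b])
  obtain ⟨hb₁, hb₂⟩ := abs_lt.mp (show |b| < 4 by linarith [abs_nonneg a])
  interval_cases a <;> interval_cases b <;> simp_all

lemma eisensteinNorm_ne_zero {p : ℤ × ℤ} (hp : p ≠ 0) : eisensteinNorm p ≠ 0 := by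
  have := natAbs_add_natAbs_le_two_mul_eisensteinNorm p
  contrapose! hp
  exact Prod.ext (Int.natAbs_eq_zero.mp (by omega)) (Int.natAbs_eq_zero.mp (by omega))

lemma summable_pow_natAbs_s9 {r : ℝ} (h0 : 0 ≤ r) (h1 : r < 1) :
    Summable fun n : ℤ ↦ r ^ n.natAbs := by
  apply Summable.of_nat_of_neg <;> simpa using summable_geometric_of_lt_one h0 h1

lemma tsum_pow_natAbs {r : ℝ} (h0 : 0 ≤ r) (h1 : r < 1) :
    ∑' n : ℤ, r ^ n.natAbs = (1 + r) / (1 - r) := by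
  have hs : Summable fun n : ℕ ↦ r ^ n := summable_geometric_of_lt_one h0 h1
  rw [Summable.tsum_of_nat_of_neg (by simpa using hs) (by simpa using hs)]
  simp only [Int.natAbs_neg, Int.natAbs_natCast, Int.natAbs_zero, pow_zero,
    tsum_geometric_of_lt_one h0 h1]
  field_simp [show 1 - r ≠ 0 by linarith]
  ring

lemma summable_pow_natAbs_mul_pow_natAbs {r : ℝ} (h0 : 0 ≤ r) (h1 : r < 1) :
    Summable fun p : ℤ × ℤ ↦ r ^ p.1.natAbs * r ^ p.2.natAbs :=
  (summable_pow_natAbs_s9 h0 h1).mul_of_nonneg (summable_pow_natAbs_s9 h0 h1)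
    (fun _ ↦ pow_nonneg h0 _) (fun _ ↦ pow_nonneg h0 _)

lemma tsum_pow_natAbs_mul_pow_natAbs {r : ℝ} (h0 : 0 ≤ r) (h1 : r < 1) :
    ∑' p : ℤ × ℤ, r ^ p.1.natAbs * r ^ p.2.natAbs = ((1 + r) / (1 - r)) ^ 2 := by
  have hn : Summable fun n : ℤ ↦ ‖r ^ n.natAbs‖ := by
    simpa only [Real.norm_of_nonneg (pow_nonneg h0 _)] using summable_pow_natAbs_s9 h0 h1
  rw [← tsum_mul_tsum_of_summable_norm hn hn, tsum_pow_natAbs h0 h1, sq]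

lemma abs_pow_eisensteinNorm_le {x s : ℝ} (hs0 : 0 ≤ s) (hs1 : s ≤ 1) (hx : |x| ≤ s ^ 2)
    (p : ℤ × ℤ) : |x ^ eisensteinNorm p| ≤ s ^ p.1.natAbs * s ^ p.2.natAbs :=
  calc |x ^ eisensteinNorm p| ≤ (s ^ 2) ^ eisensteinNorm p := by
        rw [abs_pow]; exact pow_le_pow_left₀ (abs_nonneg x) hx _
    _ = s ^ (2 * eisensteinNorm p) := (pow_mul s 2 _).symm
    _ ≤ s ^ (p.1.natAbs + p.2.natAbs) :=
        pow_le_pow_of_le_one hs0 hs1 (natAbs_add_natAbs_le_two_mul_eisensteinNorm p)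
    _ = s ^ p.1.natAbs * s ^ p.2.natAbs := pow_add s _ _

lemma summable_pow_eisensteinNorm {x : ℝ} (hx : |x| < 1) :
    Summable fun p : ℤ × ℤ ↦ x ^ eisensteinNorm p := by
  have hs : √|x| < 1 := (Real.sqrt_lt_sqrt (abs_nonneg x) hx).trans_eq Real.sqrt_one
  refine Summable.of_norm_bounded (summable_pow_natAbs_mul_pow_natAbs (Real.sqrt_nonneg _) hs)
    fun p ↦ ?_
  exact abs_pow_eisensteinNorm_le (Real.sqrt_nonneg _) hs.le (Real.sq_sqrt (abs_nonneg x)).ge p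

noncomputable def eisensteinTheta (x : ℝ) : ℝ := ∑' p : ℤ × ℤ, x ^ eisensteinNorm p

lemma eisensteinTheta_zero : eisensteinTheta 0 = 1 := by
  rw [eisensteinTheta, tsum_eq_single 0 fun p hp ↦ zero_pow (eisensteinNorm_ne_zero hp)]
  simp [eisensteinNorm]

lemma continuousOn_eisensteinTheta {r : ℝ} (hr : r < 1) :
    ContinuousOn eisensteinTheta (Icc (-r) r) := by
  rcases lt_or_ge r 0 with hr0 | hr0
  · simp [Icc_eq_empty (by linarith : ¬ -r ≤ r)]
  have hs : √r < 1 := (Real.sqrt_lt_sqrt hr0 hr).trans_eq Real.sqrt_one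
  refine continuousOn_tsum (fun p ↦ (continuous_pow _).continuousOn)
    (summable_pow_natAbs_mul_pow_natAbs (Real.sqrt_nonneg r) hs) fun p x hx ↦ ?_
  refine abs_pow_eisensteinNorm_le (Real.sqrt_nonneg r) hs.le ?_ p
  rw [Real.sq_sqrt hr0]
  exact abs_le.mpr hx

lemma neg_pow_eisensteinNorm_le {t : ℝ} (ht0 : 0 ≤ t) (ht1 : t ≤ 1) (p : ℤ × ℤ) :
    (-t) ^ eisensteinNorm p ≤ t ^ p.1.natAbs * t ^ p.2.natAbs := by
  by_cases hp : p = (1, -1) ∨ p = (-1, 1)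
  · have hq : eisensteinNorm p = 1 := by rcases hp with rfl | rfl <;> rfl
    rw [hq, pow_one]
    exact (neg_nonpos.mpr ht0).trans (by positivity)
  push Not at hp
  calc (-t) ^ eisensteinNorm p ≤ t ^ eisensteinNorm p := by
        simpa only [abs_pow, abs_neg, abs_of_nonneg ht0] using le_abs_self ((-t) ^ eisensteinNorm p)
    _ ≤ t ^ (p.1.natAbs + p.2.natAbs) :=
        pow_le_pow_of_le_one ht0 ht1 (natAbs_add_natAbs_le_eisensteinNorm hp.1 hp.2)
    _ = t ^ p.1.natAbs * t ^ p.2.natAbs := pow_add t _ _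

lemma eisensteinTheta_neg_le {t : ℝ} (ht0 : 0 ≤ t) (ht1 : t < 1) (s : Finset (ℤ × ℤ)) :
    eisensteinTheta (-t) ≤ ((1 + t) / (1 - t)) ^ 2 -
      ∑ p ∈ s, (t ^ p.1.natAbs * t ^ p.2.natAbs - (-t) ^ eisensteinNorm p) := by
  have hg := summable_pow_eisensteinNorm (x := -t) (by rwa [abs_neg, abs_of_nonneg ht0])
  have hh := summable_pow_natAbs_mul_pow_natAbs ht0 ht1
  have hgap := (hh.sub hg).sum_le_tsum s fun p _ ↦
    sub_nonneg.mpr (neg_pow_eisensteinNorm_le ht0 ht1.le p)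
  rw [hh.tsum_sub hg, tsum_pow_natAbs_mul_pow_natAbs ht0 ht1] at hgap
  rw [eisensteinTheta]
  linarith

lemma eisensteinTheta_neg_quarter_neg : eisensteinTheta (-(1 / 4)) < 0 := by
  have hbox : ∑ p ∈ ({-1, 0, 1} : Finset ℤ) ×ˢ {-1, 0, 1},
      ((1 / 4 : ℝ) ^ p.1.natAbs * (1 / 4) ^ p.2.natAbs - (-(1 / 4)) ^ eisensteinNorm p) = 89 / 32 := by
    norm_num [sum_product, eisensteinNorm]
  have h := eisensteinTheta_neg_le (t := 1 / 4) (by norm_num) (by norm_num)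
    (({-1, 0, 1} : Finset ℤ) ×ˢ {-1, 0, 1})
  rw [hbox] at h
  norm_num at h
  linarith

/-- The function `f(x) := ∑_{a,b ∈ ℤ} x^{a²+ab+b²}` has at least one zero in `(-1, 0)`. -/
theorem quadratic_form_series_has_zero :
    ∃ x : ℝ, -1 < x ∧ x < 0 ∧
      (∑' p : ℤ × ℤ, x ^ (p.1 ^ 2 + p.1 * p.2 + p.2 ^ 2)) = 0 := by
  have hcont : ContinuousOn eisensteinTheta (Icc (-(1 / 4)) 0) :=
    (continuousOn_eisensteinTheta (by norm_num)).mono (Icc_subset_Icc_right (by norm_num))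
  obtain ⟨x, hx, hx0⟩ := intermediate_value_Ioo (by norm_num) hcont
    ⟨eisensteinTheta_neg_quarter_neg, by rw [eisensteinTheta_zero]; norm_num⟩
  refine ⟨x, by linarith [hx.1], hx.2, ?_⟩
  rw [← hx0, eisensteinTheta]
  exact tsum_congr fun p ↦ by rw [← eisensteinNorm_cast, zpow_natCast]
end
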